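/- Decomposition of FB entropy: defining the discord part E^D_FB(m) = −Σ_θ BetP(θ) log BetP(θ) (Shannon entropy of the pignistic transform) and the non-specificity part E^N_FB(m) = E_FB(m) − E^D_FB(m), the non-specificity part is nonnegative for every BPA m, i.e., E_FB(m) ≥ H(BetP_m). -/

import Mathlib

/-!
Spreading each mass `m_F(F)` uniformly over the points of `F` gives back `BetP_m`
(`BetP_mF`; this rests on `∑_{θ ∈ F ⊆ G} 1/|F| = (2^|G| - 1)/|G|`). Moreover
`m_F(F) ≤ BetP_m(θ)` whenever `θ ∈ F`, because `|G| ≤ 2^|G| - 1`. Hence in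
`-BetP(θ) log BetP(θ) = ∑_{F ∋ θ} (m_F(F)/|F|) (-log BetP(θ))` every `-log BetP(θ)` may be
replaced by the larger `-log m_F(F)`, and summing over `θ` yields the entropy of `m_F`.
-/

open Finset Real Filter

/-- A basic probability assignment on the power set of a finite frame `Θ`. -/
noncomputable def IsBPA {Θ : Type*} [Fintype Θ] [DecidableEq Θ] (m : Finset Θ → ℝ) : Prop :=
  m ∅ = 0 ∧ (∀ F, 0 ≤ m F) ∧ ∑ F : Finset Θ, m F = 1

/-- The fractal-based basic probability assignment:
`m_F(F) = m(F)/(2^|F|-1) + Σ_{F ⊊ G} m(G)/(2^|G|-1)`. -/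
noncomputable def mF {Θ : Type*} [Fintype Θ] [DecidableEq Θ] (m : Finset Θ → ℝ) (F : Finset Θ) : ℝ :=
  m F / ((2 : ℝ) ^ F.card - 1) +
    ∑ G ∈ Finset.univ.filter (fun G : Finset Θ => F ⊂ G), m G / ((2 : ℝ) ^ G.card - 1)

/-- Fractal-based belief entropy: Shannon entropy of `m_F` over nonempty subsets. -/
noncomputable def EFB {Θ : Type*} [Fintype Θ] [DecidableEq Θ] (m : Finset Θ → ℝ) : ℝ :=
  ∑ F ∈ Finset.univ.filter (fun F : Finset Θ => F.Nonempty), Real.negMulLog (mF m F)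

/-- Pignistic probability transformation: `BetP(θ) = Σ_{θ ∈ F} m(F)/|F|`. -/
noncomputable def BetP {Θ : Type*} [Fintype Θ] [DecidableEq Θ] (m : Finset Θ → ℝ) (θ : Θ) : ℝ :=
  ∑ F ∈ Finset.univ.filter (fun F : Finset Θ => θ ∈ F), m F / (F.card : ℝ)

/-- Plausibility of a singleton: `Pl(θ) = Σ_{θ ∈ F} m(F)`. -/
noncomputable def Pl {Θ : Type*} [Fintype Θ] [DecidableEq Θ] (m : Finset Θ → ℝ) (θ : Θ) : ℝ :=
  ∑ F ∈ Finset.univ.filter (fun F : Finset Θ => θ ∈ F), m F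

theorem sum_negMulLog_le_of_stochastic {ι κ : Type*} {s : Finset ι} {t : Finset κ}
    {p : ι → ℝ} {q : κ → ℝ} {w : ι → κ → ℝ} (hp : ∀ i ∈ s, 0 ≤ p i)
    (hw : ∀ i ∈ s, ∀ j ∈ t, 0 ≤ w i j) (hw_sum : ∀ i ∈ s, ∑ j ∈ t, w i j = 1)
    (hq : ∀ j ∈ t, q j = ∑ i ∈ s, p i * w i j)
    (hpq : ∀ i ∈ s, ∀ j ∈ t, w i j ≠ 0 → p i ≤ q j) :
    ∑ j ∈ t, negMulLog (q j) ≤ ∑ i ∈ s, negMulLog (p i) := by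
  have hterm : ∀ i ∈ s, ∀ j ∈ t,
      p i * w i j * -log (q j) ≤ p i * w i j * -log (p i) := by
    intro i hi j hj
    rcases (mul_nonneg (hp i hi) (hw i hi j hj)).eq_or_lt with h0 | hpos
    · simp [← h0]
    · have hwj : w i j ≠ 0 := fun h ↦ by simp [h] at hpos
      have hpi : 0 < p i := pos_of_mul_pos_left hpos (hw i hi j hj)
      gcongr
      exact hpq i hi j hj hwj
  calc ∑ j ∈ t, negMulLog (q j)
      = ∑ j ∈ t, ∑ i ∈ s, p i * w i j * -log (q j) := by
        refine sum_congr rfl fun j hj ↦ ?_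
        rw [← sum_mul, ← hq j hj, negMulLog, neg_mul_comm]
    _ ≤ ∑ j ∈ t, ∑ i ∈ s, p i * w i j * -log (p i) :=
        sum_le_sum fun j hj ↦ sum_le_sum fun i hi ↦ hterm i hi j hj
    _ = ∑ i ∈ s, negMulLog (p i) := by
        rw [sum_comm]
        refine sum_congr rfl fun i hi ↦ ?_
        rw [← sum_mul, ← mul_sum, hw_sum i hi, mul_one, negMulLog, neg_mul_comm]

theorem sum_choose_div_succ (n : ℕ) :
    ∑ k ∈ range (n + 1), (n.choose k : ℝ) / (k + 1) = (2 ^ (n + 1) - 1) / (n + 1) := by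
  have hchoose (k : ℕ) : (n.choose k : ℝ) / (k + 1) = ((n + 1).choose (k + 1) : ℝ) / (n + 1) := by
    rw [div_eq_div_iff (by positivity) (by positivity), mul_comm]
    exact_mod_cast Nat.add_one_mul_choose_eq n k
  have hsum : ∑ k ∈ range (n + 1), ((n + 1).choose (k + 1) : ℝ) = 2 ^ (n + 1) - 1 := by
    have := Nat.sum_range_choose (n + 1)
    rw [sum_range_succ'] at this
    rw [eq_sub_iff_add_eq]
    exact_mod_cast (by simpa using this)
  simp_rw [hchoose, ← sum_div, hsum]

theorem sum_powerset_inv_card_add_one {α : Type*} (s : Finset α) :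
    ∑ S ∈ s.powerset, ((S.card : ℝ) + 1)⁻¹ = (2 ^ (s.card + 1) - 1) / (s.card + 1) := by
  rw [sum_powerset_apply_card (fun k ↦ ((k : ℝ) + 1)⁻¹), ← sum_choose_div_succ]
  simp only [nsmul_eq_mul, div_eq_mul_inv]

theorem sum_powerset_filter_mem_inv_card {α : Type*} [DecidableEq α] {G : Finset α} {a : α}
    (ha : a ∈ G) :
    ∑ F ∈ G.powerset with a ∈ F, (F.card : ℝ)⁻¹ = (2 ^ G.card - 1) / G.card := by
  have hcard : G.card = (G.erase a).card + 1 := (card_erase_add_one ha).symm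
  rw [hcard, Nat.cast_succ, ← sum_powerset_inv_card_add_one]
  refine sum_nbij' (fun F ↦ F.erase a) (insert a) ?_ ?_ ?_ ?_ ?_
  · intro F hF
    simp only [mem_filter, mem_powerset] at hF ⊢
    exact erase_subset_erase a hF.1
  · intro S hS
    simp only [mem_filter, mem_powerset] at hS ⊢
    exact ⟨insert_subset ha (hS.trans (erase_subset a G)), mem_insert_self a S⟩
  · intro F hF
    simp only [mem_filter, mem_powerset] at hF
    exact insert_erase hF.2
  · intro S hS
    rw [mem_powerset] at hS
    exact erase_insert fun h ↦ notMem_erase a G (hS h)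
  · intro F hF
    simp only [mem_filter, mem_powerset] at hF
    rw [card_erase_of_mem hF.2, Nat.cast_pred (card_pos.2 ⟨a, hF.2⟩), sub_add_cancel]

theorem natCast_le_two_pow_sub_one (n : ℕ) : (n : ℝ) ≤ 2 ^ n - 1 := by
  rw [le_sub_iff_add_le]
  exact_mod_cast Nat.lt_two_pow_self

section BPA

variable {Θ : Type*} [Fintype Θ] [DecidableEq Θ]

theorem mF_eq_sum_superset (m : Finset Θ → ℝ) (F : Finset Θ) :
    mF m F = ∑ G with F ⊆ G, m G / (2 ^ G.card - 1) := by
  have hsplit : univ.filter (F ⊆ ·) = insert F (univ.filter (F ⊂ ·)) := by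
    ext G
    simp [subset_iff_ssubset_or_eq, eq_comm, or_comm]
  rw [hsplit, sum_insert (by simp), mF]

theorem mF_nonneg {m : Finset Θ → ℝ} (hm : ∀ F, 0 ≤ m F) (F : Finset Θ) : 0 ≤ mF m F :=
  add_nonneg (div_nonneg (hm F) (sub_nonneg.2 (one_le_pow₀ one_le_two)))
    (sum_nonneg fun G _ ↦ div_nonneg (hm G) (sub_nonneg.2 (one_le_pow₀ one_le_two)))

theorem mF_le_BetP {m : Finset Θ → ℝ} (hm : ∀ F, 0 ≤ m F) {F : Finset Θ} {θ : Θ} (hθ : θ ∈ F) :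
    mF m F ≤ BetP m θ := by
  rw [mF_eq_sum_superset, BetP]
  calc ∑ G with F ⊆ G, m G / (2 ^ G.card - 1)
      ≤ ∑ G with F ⊆ G, m G / G.card := by
        refine sum_le_sum fun G hG ↦ ?_
        have hG : 0 < G.card := card_pos.2 ⟨θ, (mem_filter.1 hG).2 hθ⟩
        exact div_le_div_of_nonneg_left (hm G) (by exact_mod_cast hG)
          (natCast_le_two_pow_sub_one _)
    _ ≤ ∑ G with θ ∈ G, m G / G.card :=
        sum_le_sum_of_subset_of_nonneg (monotone_filter_right _ fun _ _ hFG ↦ hFG hθ)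
          fun G _ _ ↦ div_nonneg (hm G) G.card.cast_nonneg

theorem BetP_mF (m : Finset Θ → ℝ) : BetP (mF m) = BetP m := by
  funext θ
  calc BetP (mF m) θ
      = ∑ F with θ ∈ F, ∑ G with F ⊆ G, m G / (2 ^ G.card - 1) / F.card := by
        simp only [BetP, mF_eq_sum_superset, sum_div]
    _ = ∑ G with θ ∈ G, ∑ F ∈ G.powerset with θ ∈ F, m G / (2 ^ G.card - 1) / F.card :=
        sum_comm' fun F G ↦ by
          simp only [mem_filter, mem_univ, true_and, mem_powerset]
          exact ⟨fun h ↦ ⟨⟨h.2, h.1⟩, h.2 h.1⟩, fun h ↦ ⟨h.1.2, h.1.1⟩⟩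
    _ = BetP m θ := by
        refine sum_congr rfl fun G hG ↦ ?_
        have hθG : θ ∈ G := (mem_filter.1 hG).2
        have hpos : (0 : ℝ) < 2 ^ G.card - 1 :=
          sub_pos.2 (one_lt_pow₀ one_lt_two (card_pos.2 ⟨θ, hθG⟩).ne')
        simp_rw [div_eq_mul_inv (m G / _), ← mul_sum, sum_powerset_filter_mem_inv_card hθG]
        field_simp

end BPA

theorem EFB_ge_pignistic_entropy_general {Θ : Type*} [Fintype Θ] [DecidableEq Θ]
    (m : Finset Θ → ℝ) (hm : IsBPA m) :
    ∑ θ : Θ, Real.negMulLog (BetP m θ) ≤ EFB m := by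
  obtain ⟨-, hm_nonneg, -⟩ := hm
  refine sum_negMulLog_le_of_stochastic (w := fun F θ ↦ if θ ∈ F then (F.card : ℝ)⁻¹ else 0)
    (fun F _ ↦ mF_nonneg hm_nonneg F) (fun F _ θ _ ↦ by positivity) ?_ ?_ ?_
  · intro F hF
    have hF : F.Nonempty := (mem_filter.1 hF).2
    simp [sum_ite_mem, hF.card_ne_zero]
  · intro θ _
    rw [← BetP_mF, BetP, sum_filter, sum_filter]
    refine sum_congr rfl fun F _ ↦ ?_
    by_cases hθ : θ ∈ F
    · simp [hθ, show F.Nonempty from ⟨θ, hθ⟩, div_eq_mul_inv]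
    · simp [hθ]
  · intro F _ θ _ hw
    by_cases hθ : θ ∈ F
    · exact mF_le_BetP hm_nonneg hθ
    · exact absurd (if_neg hθ) hw

theorem EFB_ge_pignistic_entropy {Θ : Type*} [Fintype Θ] [DecidableEq Θ] [Nonempty Θ]
    (m : Finset Θ → ℝ) (hm : IsBPA m) :
    ∑ θ : Θ, Real.negMulLog (BetP m θ) ≤ EFB m :=
  EFB_ge_pignistic_entropy_general m hm
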